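/- arXiv:2011.03809 — 2 statements merged into one kernel-verified Lean document; each statement's English description precedes it below -/
import Mathlib

section
/- Let B ∈ M_d(ℂ) be hermitian with comparison matrix M(B) = s·I − P where P is an irreducible entrywise nonnegative symmetric matrix and s ≥ ρ(P) (the spectral radius of P). Then there exists a positive diagonal matrix D such that DBD is diagonally dominant; i.e., B is scaled diagonally dominant. -/
/-!
For symmetric `P ≥ 0`, the maximum `r` of `x ⬝ᵥ P *ᵥ x` on the unit sphere is attained at a
nonnegative vector `u` (replace a maximiser `x` by `|x|`). Then `r • 1 - P` is positive
semidefinite and its quadratic form vanishes at `u`, so `P *ᵥ u = r • u`, and irreducibility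
forces `u > 0`. Being an eigenvalue, `r ≤ s`, so `M(B) *ᵥ u = (s - r) • u ≥ 0`: row by row this
is the diagonal dominance of `DBD` for `D = diag u`.
-/

open Matrix Finset

namespace Matrix

variable {n : Type*} [Fintype n]

lemma isCompact_setOf_dotProduct_self_eq_one : IsCompact {x : n → ℝ | x ⬝ᵥ x = 1} := by
  refine Metric.isCompact_of_isClosed_isBounded
    (isClosed_eq (continuous_id.dotProduct continuous_id) continuous_const)
    ((Metric.isBounded_closedBall (x := 0) (r := 1)).subset fun x hx => ?_)
  rw [mem_closedBall_zero_iff, pi_norm_le_iff_of_nonneg zero_le_one]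
  intro i
  rw [Real.norm_eq_abs, ← sq_le_one_iff_abs_le_one, ← hx.out, sq]
  exact single_le_sum (f := fun j => x j * x j) (fun j _ => mul_self_nonneg (x j)) (mem_univ i)

lemma exists_isMaxOn_dotProduct_mulVec [Nonempty n] (P : Matrix n n ℝ) :
    ∃ u ∈ {x : n → ℝ | x ⬝ᵥ x = 1}, IsMaxOn (fun x => x ⬝ᵥ P *ᵥ x) {x | x ⬝ᵥ x = 1} u := by
  classical
  refine isCompact_setOf_dotProduct_self_eq_one.exists_isMaxOn
    ⟨Pi.single (Classical.arbitrary n) 1, by simp⟩ ?_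
  exact (continuous_id.dotProduct (continuous_const.matrix_mulVec continuous_id)).continuousOn

lemma dotProduct_mulVec_le_mul_dotProduct_self {P : Matrix n n ℝ} {r : ℝ}
    (h : ∀ x, x ⬝ᵥ x = 1 → x ⬝ᵥ P *ᵥ x ≤ r) (x : n → ℝ) :
    x ⬝ᵥ P *ᵥ x ≤ r * (x ⬝ᵥ x) := by
  rcases (show 0 ≤ x ⬝ᵥ x by simpa using dotProduct_self_star_nonneg x).eq_or_lt with hx | hx
  · simp [dotProduct_self_eq_zero.1 hx.symm]
  set c := √(x ⬝ᵥ x)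
  have hc : c ^ 2 = x ⬝ᵥ x := Real.sq_sqrt hx.le
  have hscaled : ∀ v : n → ℝ, (c⁻¹ • x) ⬝ᵥ (c⁻¹ • v) = (x ⬝ᵥ x)⁻¹ * (x ⬝ᵥ v) := fun v => by
    rw [smul_dotProduct, dotProduct_smul, smul_eq_mul, smul_eq_mul, ← mul_assoc, ← sq, inv_pow, hc]
  have hunit := h (c⁻¹ • x) (by rw [hscaled, inv_mul_cancel₀ hx.ne'])
  rw [mulVec_smul, hscaled, inv_mul_le_iff₀ hx] at hunit
  linarith

lemma dotProduct_mulVec_le_abs_dotProduct_mulVec_abs {P : Matrix n n ℝ} (hP : ∀ i j, 0 ≤ P i j)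
    (x : n → ℝ) :
    x ⬝ᵥ P *ᵥ x ≤ |x| ⬝ᵥ P *ᵥ |x| := by
  simp only [dotProduct, mulVec, mul_sum, Pi.abs_apply]
  refine sum_le_sum fun i _ => sum_le_sum fun j _ => ?_
  have := le_abs_self (x i * x j)
  rw [abs_mul] at this
  nlinarith [hP i j]

lemma abs_dotProduct_abs (x : n → ℝ) : |x| ⬝ᵥ |x| = x ⬝ᵥ x := by
  simp [dotProduct, abs_mul_abs_self]

theorem exists_nonneg_eigenvector_of_nonneg_of_isSymm [DecidableEq n] [Nonempty n]
    {P : Matrix n n ℝ} (hP0 : ∀ i j, 0 ≤ P i j) (hP : P.IsSymm) :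
    ∃ (r : ℝ) (u : n → ℝ), 0 ≤ u ∧ u ≠ 0 ∧ P *ᵥ u = r • u := by
  obtain ⟨v, hv, hmax⟩ := exists_isMaxOn_dotProduct_mulVec P
  set r := |v| ⬝ᵥ P *ᵥ |v|
  have hbound : ∀ x, x ⬝ᵥ P *ᵥ x ≤ r * (x ⬝ᵥ x) :=
    dotProduct_mulVec_le_mul_dotProduct_self fun x hx =>
      (hmax hx).trans (dotProduct_mulVec_le_abs_dotProduct_mulVec_abs hP0 v)
  have hquad : ∀ x, x ⬝ᵥ (r • 1 - P) *ᵥ x = r * (x ⬝ᵥ x) - x ⬝ᵥ P *ᵥ x := fun x => by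
    rw [sub_mulVec, smul_mulVec, one_mulVec, dotProduct_sub, dotProduct_smul, smul_eq_mul]
  have hpsd : (r • 1 - P).PosSemidef :=
    .of_dotProduct_mulVec_nonneg
      (isHermitian_iff_isSymm.2 ((isSymm_one.smul r).sub hP))
      fun x => by simpa [hquad] using hbound x
  have hker : (r • 1 - P) *ᵥ |v| = 0 :=
    (hpsd.dotProduct_mulVec_zero_iff |v|).1 (by
      rw [star_trivial, hquad, abs_dotProduct_abs, hv.out, mul_one, sub_self])
  refine ⟨r, |v|, abs_nonneg v, fun h => ?_, ?_⟩
  · simpa [h, hv.out] using abs_dotProduct_abs v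
  · rwa [sub_mulVec, smul_mulVec, one_mulVec, sub_eq_zero, eq_comm] at hker

theorem pos_of_nonneg_eigenvector_of_isSymm {P : Matrix n n ℝ} (hP0 : ∀ i j, 0 ≤ P i j)
    (hP : P.IsSymm) (hirr : ∀ S : Finset n, S.Nonempty → S ≠ univ → ∃ i ∈ S, ∃ j ∉ S, P i j ≠ 0)
    {r : ℝ} {u : n → ℝ} (hu0 : 0 ≤ u) (hu : u ≠ 0) (hPu : P *ᵥ u = r • u) (i : n) :
    0 < u i := by
  classical
  refine (hu0 i).lt_of_ne' fun hi => ?_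
  obtain ⟨k, hk⟩ := Function.ne_iff.1 hu
  obtain ⟨a, ha, b, hb, hab⟩ := hirr {k | u k ≠ 0} ⟨k, by simpa using hk⟩
    fun h => by simpa [hi] using h.ge (mem_univ i)
  simp only [mem_filter, mem_univ, true_and, not_not] at ha hb
  have hsum : ∑ j, P b j * u j = 0 := by simpa [hb, mulVec, dotProduct] using congrFun hPu b
  have := (sum_eq_zero_iff_of_nonneg fun j _ => mul_nonneg (hP0 b j) (hu0 j)).1 hsum a (mem_univ a)
  rw [hP.apply] at this
  exact mul_ne_zero hab ha this

theorem mem_spectrum_of_mulVec_eq_smul {K : Type*} [Field K] [DecidableEq n]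
    {A : Matrix n n K} {r : K} {v : n → K} (hv : v ≠ 0) (h : A *ᵥ v = r • v) :
    r ∈ spectrum K A := by
  rw [← spectrum_toLin']
  exact Module.End.hasEigenvalue_iff_mem_spectrum.1 <|
    Module.End.hasEigenvalue_of_hasEigenvector ⟨Module.End.mem_eigenspace_iff.2 (by simpa), hv⟩

def comparisonMatrix {𝕜 : Type*} [Norm 𝕜] [DecidableEq n] (B : Matrix n n 𝕜) : Matrix n n ℝ :=
  of fun i j => if i = j then ‖B i j‖ else -‖B i j‖

lemma comparisonMatrix_mulVec_apply {𝕜 : Type*} [Norm 𝕜] [DecidableEq n] (B : Matrix n n 𝕜)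
    (u : n → ℝ) (i : n) :
    (comparisonMatrix B *ᵥ u) i = ‖B i i‖ * u i - ∑ j ∈ univ.erase i, ‖B i j‖ * u j := by
  rw [mulVec, dotProduct, ← add_sum_erase _ _ (mem_univ i), sub_eq_add_neg, ← sum_neg_distrib]
  congr 1
  · simp [comparisonMatrix]
  · refine sum_congr rfl fun j hj => ?_
    simp [comparisonMatrix, (ne_of_mem_erase hj).symm]

theorem sum_norm_mul_mul_le_of_comparisonMatrix_mulVec_nonneg {𝕜 : Type*} [RCLike 𝕜]
    [DecidableEq n] {B : Matrix n n 𝕜} {u : n → ℝ} (hu : 0 ≤ u)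
    (hM : 0 ≤ comparisonMatrix B *ᵥ u) (i : n) :
    ∑ j ∈ univ.filter (· ≠ i), ‖(u i : 𝕜) * B i j * (u j : 𝕜)‖ ≤
      ‖(u i : 𝕜) * B i i * (u i : 𝕜)‖ := by
  have hnorm : ∀ j, ‖(u i : 𝕜) * B i j * (u j : 𝕜)‖ = u i * (‖B i j‖ * u j) := fun j => by
    rw [norm_mul, norm_mul, RCLike.norm_ofReal, RCLike.norm_ofReal, abs_of_nonneg (hu i),
      abs_of_nonneg (hu j), mul_assoc]
  have hrow := hM i
  rw [Pi.zero_apply, comparisonMatrix_mulVec_apply, sub_nonneg] at hrow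
  simp only [hnorm, filter_ne', ← mul_sum]
  exact mul_le_mul_of_nonneg_left hrow (hu i)

end Matrix

theorem scaled_diagonally_dominant_of_comparison_M_matrix_general {d : ℕ}
    (B : Matrix (Fin d) (Fin d) ℂ)
    (s : ℝ) (P : Matrix (Fin d) (Fin d) ℝ)
    (hP0 : ∀ i j, 0 ≤ P i j) (hPsymm : P.IsSymm)
    (hirr : ∀ S : Finset (Fin d), S.Nonempty → S ≠ univ →
      ∃ i ∈ S, ∃ j ∉ S, P i j ≠ 0)
    (hcomp : (Matrix.of fun i j =>
        if i = j then ‖B i j‖ else -‖B i j‖)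
      = s • (1 : Matrix (Fin d) (Fin d) ℝ) - P)
    (hs : ∀ μ ∈ spectrum ℝ P, |μ| ≤ s) :
    ∃ D : Fin d → ℝ, (∀ i, 0 < D i) ∧
      ∀ i, ∑ j ∈ univ.filter (· ≠ i),
          ‖(D i : ℂ) * B i j * (D j : ℂ)‖
        ≤ ‖(D i : ℂ) * B i i * (D i : ℂ)‖ := by
  rcases isEmpty_or_nonempty (Fin d) with _ | _
  · exact ⟨fun _ => 1, fun _ => one_pos, isEmptyElim⟩
  obtain ⟨r, u, hu0, hu, hPu⟩ := exists_nonneg_eigenvector_of_nonneg_of_isSymm hP0 hPsymm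
  have hr : r ≤ s := (le_abs_self r).trans (hs r (mem_spectrum_of_mulVec_eq_smul hu hPu))
  have hM : 0 ≤ comparisonMatrix B *ᵥ u := by
    rw [comparisonMatrix, hcomp, sub_mulVec, smul_mulVec, one_mulVec, hPu, ← sub_smul]
    exact smul_nonneg (sub_nonneg.2 hr) hu0
  exact ⟨u, pos_of_nonneg_eigenvector_of_isSymm hP0 hPsymm hirr hu0 hu hPu,
    sum_norm_mul_mul_le_of_comparisonMatrix_mulVec_nonneg hu0 hM⟩

/-- If `B` is hermitian with comparison matrix `M(B) = s·I − P`, where `P` is an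
irreducible entrywise nonnegative symmetric matrix and `s ≥ ρ(P)`, then `B` is scaled
diagonally dominant: there is a positive diagonal matrix `D` with `DBD` diagonally dominant. -/
theorem scaled_diagonally_dominant_of_comparison_M_matrix {d : ℕ}
    (B : Matrix (Fin d) (Fin d) ℂ) (hB : B.IsHermitian)
    (s : ℝ) (P : Matrix (Fin d) (Fin d) ℝ)
    (hP0 : ∀ i j, 0 ≤ P i j) (hPsymm : P.IsSymm)
    (hirr : ∀ S : Finset (Fin d), S.Nonempty → S ≠ univ →
      ∃ i ∈ S, ∃ j ∉ S, P i j ≠ 0)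
    (hcomp : (Matrix.of fun i j =>
        if i = j then ‖B i j‖ else -‖B i j‖)
      = s • (1 : Matrix (Fin d) (Fin d) ℝ) - P)
    (hs : ∀ μ ∈ spectrum ℝ P, |μ| ≤ s) :
    ∃ D : Fin d → ℝ, (∀ i, 0 < D i) ∧
      ∀ i, ∑ j ∈ univ.filter (· ≠ i),
          ‖(D i : ℂ) * B i j * (D j : ℂ)‖
        ≤ ‖(D i : ℂ) * B i i * (D i : ℂ)‖ :=
  scaled_diagonally_dominant_of_comparison_M_matrix_general B s P hP0 hPsymm hirr hcomp hs
end

section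
/- Let (A,B) be a pair of d×d complex matrices with equal diagonals such that A has nonnegative entries, B is hermitian diagonally dominant, and A_{ij}A_{ji} ≥ |B_{ij}|² for all i,j. Then (A,B) is pairwise completely positive with factor width 2: there exist vectors v_n, w_n ∈ ℂ^d with v_n ⊙ w_n having at most 2 nonzero coordinates, such that A = Σ_n |v_n⊙ v̄_n⟩⟨w_n⊙ w̄_n| and B = Σ_n |v_n⊙ w_n⟩⟨v_n⊙ w_n|. -/
open Matrix Finset

/-!
Pairs of PCP factor width `k` form a convex cone: concatenating decompositions adds pairs, and
scaling `v` by `√c` scales a pair by `c ≥ 0`. So it suffices to split `(A, B)` into elementary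
pieces. Diagonal dominance leaves the nonnegative slack `B i i - ∑_{j ≠ i} ‖B i j‖` on the
diagonal, a piece of width one. Each ordered pair `i ≠ j` contributes half of the block with
entries `‖b‖` at `(i, i)` and `(j, j)` in both matrices, `A i j, A j i` off the diagonal of the
first and `b, conj b` off the diagonal of the second, where `b = B i j`. If `b ≠ 0` one rank-one
term with `v ⊙ w` supported on `{i, j}` produces this block except that its `(j, i)` entry in the
first matrix is `‖b‖² / A i j`, which is at most `A j i` by `‖b‖² ≤ A i j * A j i`; the missing
part is a term with `v ⊙ w = 0`.
-/

section SingleVectors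

variable {n α : Type*} [DecidableEq n]

theorem Pi.single_mul_single_of_ne [MulZeroClass α] {i j : n} (hij : i ≠ j) (x y : α) :
    Pi.single i x * Pi.single j y = (0 : n → α) := by
  ext k
  by_cases hk : k = i
  · simp [hk, hij]
  · simp [hk]

theorem Pi.single_add_single_mul_single_add_single [NonUnitalNonAssocSemiring α] {i j : n}
    (hij : i ≠ j) (x y x' y' : α) :
    (Pi.single i x + Pi.single j y) * (Pi.single i x' + Pi.single j y') =
      (Pi.single i (x * x') + Pi.single j (y * y') : n → α) := by
  simp only [add_mul, mul_add, ← Pi.single_mul, Pi.single_mul_single_of_ne hij,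
    Pi.single_mul_single_of_ne hij.symm, add_zero, zero_add]

theorem Pi.card_filter_single_ne_zero_le_one [Fintype n] [Zero α] [DecidableEq α] (i : n)
    (x : α) : (univ.filter fun k => (Pi.single i x : n → α) k ≠ 0).card ≤ 1 := by
  refine (card_le_card (t := {i}) fun k hk => ?_).trans (card_singleton i).le
  by_contra hk
  simp_all

theorem Pi.card_filter_single_add_single_ne_zero_le_two [Fintype n] [AddZeroClass α]
    [DecidableEq α] (i j : n) (x y : α) :
    (univ.filter fun k => (Pi.single i x + Pi.single j y : n → α) k ≠ 0).card ≤ 2 := by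
  refine (card_le_card (t := {i, j}) fun k hk => ?_).trans card_le_two
  by_contra hij
  simp_all

theorem Matrix.vecMulVec_single_single [MulZeroClass α] (i j : n) (x y : α) :
    vecMulVec (Pi.single i x) (Pi.single j y) = single i j (x * y) := by
  ext k l
  simp only [vecMulVec_apply, single_apply, Pi.single_apply]
  split_ifs <;> simp_all

theorem Matrix.vecMulVec_single_add_single [NonUnitalNonAssocSemiring α] (i j : n)
    (x y x' y' : α) :
    vecMulVec (Pi.single i x + Pi.single j y) (Pi.single i x' + Pi.single j y') =
      single i i (x * x') + single i j (x * y') + single j i (y * x') + single j j (y * y') := by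
  simp only [add_vecMulVec, vecMulVec_add, vecMulVec_single_single]
  abel

end SingleVectors

section OffDiagonalSums

variable {n : Type*} [Fintype n] [DecidableEq n]

theorem Finset.sum_sum_erase_comm {M : Type*} [AddCommMonoid M] (f : n → n → M) :
    ∑ i, ∑ j ∈ univ.erase i, f j i = ∑ i, ∑ j ∈ univ.erase i, f i j :=
  sum_comm' (by simp [eq_comm])

theorem Finset.sum_sum_erase_inv_two_smul_add_swap {α M : Type*} [DivisionRing α]
    [NeZero (2 : α)] [AddCommGroup M] [Module α M] (f : n → n → M) :
    ∑ i, ∑ j ∈ univ.erase i, (2⁻¹ : α) • (f i j + f j i) = ∑ i, ∑ j ∈ univ.erase i, f i j := by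
  simp only [smul_add, sum_add_distrib, ← smul_sum]
  rw [sum_sum_erase_comm f, ← smul_add, ← two_smul α, smul_smul, inv_mul_cancel₀ two_ne_zero,
    one_smul]

theorem Matrix.eq_sum_single_diag_add_sum_erase {α : Type*} [AddCommMonoid α]
    (M : Matrix n n α) :
    M = ∑ i, (single i i (M i i) + ∑ j ∈ univ.erase i, single i j (M i j)) := by
  conv_lhs => rw [matrix_eq_sum_single M]
  exact sum_congr rfl fun i _ => (add_sum_erase _ _ (mem_univ i)).symm

theorem Matrix.eq_sum_single_add_sum_halves {α : Type*} [DivisionRing α] [NeZero (2 : α)]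
    (M : Matrix n n α) (m : n → n → α) (δ : n → α)
    (hδ : ∀ i, M i i = δ i + ∑ j ∈ univ.erase i, m i j) :
    M = ∑ i, single i i (δ i) + ∑ i, ∑ j ∈ univ.erase i, (2⁻¹ : α) •
      (single i i (m i j) + single i j (M i j) + (single j j (m j i) + single j i (M j i))) := by
  rw [sum_sum_erase_inv_two_smul_add_swap fun i j => single i i (m i j) + single i j (M i j),
    ← sum_add_distrib]
  conv_lhs => rw [eq_sum_single_diag_add_sum_erase M]
  refine sum_congr rfl fun i _ => ?_
  rw [hδ, single_add, sum_add_distrib, ← add_assoc]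
  congr 2
  exact map_sum (singleAddMonoidHom i i) _ _

end OffDiagonalSums

theorem Complex.ofReal_sqrt_mul_star {t : ℝ} (ht : 0 ≤ t) :
    (Real.sqrt t : ℂ) * star (Real.sqrt t : ℂ) = t := by
  rw [Complex.star_def, Complex.conj_ofReal, ← Complex.ofReal_mul, Real.mul_self_sqrt ht]

def IsPCPFactorWidth {n : Type*} [Fintype n] (k : ℕ) (A B : Matrix n n ℂ) : Prop :=
  ∃ (N : ℕ) (v w : Fin N → n → ℂ),
    (∀ t, (univ.filter (fun i => v t i * w t i ≠ 0)).card ≤ k) ∧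
    A = ∑ t, vecMulVec (fun i => v t i * star (v t i)) (star fun j => w t j * star (w t j)) ∧
    B = ∑ t, vecMulVec (fun i => v t i * w t i) (star fun j => v t j * w t j)

namespace IsPCPFactorWidth

variable {n : Type*} [Fintype n] {k : ℕ} {A B A' B' : Matrix n n ℂ}

theorem zero : IsPCPFactorWidth k (0 : Matrix n n ℂ) 0 :=
  ⟨0, Fin.elim0, Fin.elim0, fun t => t.elim0, by simp, by simp⟩

theorem add (h : IsPCPFactorWidth k A B) (h' : IsPCPFactorWidth k A' B') :
    IsPCPFactorWidth k (A + A') (B + B') := by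
  obtain ⟨N, v, w, hvw, rfl, rfl⟩ := h
  obtain ⟨N', v', w', hvw', rfl, rfl⟩ := h'
  refine ⟨N + N', Fin.append v v', Fin.append w w', fun t => ?_, ?_, ?_⟩
  · refine Fin.addCases (fun t => ?_) (fun t => ?_) t
    · simpa using hvw t
    · simpa using hvw' t
  all_goals simp [Fin.sum_univ_add]

theorem sum {ι : Type*} (s : Finset ι) {A B : ι → Matrix n n ℂ}
    (h : ∀ i ∈ s, IsPCPFactorWidth k (A i) (B i)) :
    IsPCPFactorWidth k (∑ i ∈ s, A i) (∑ i ∈ s, B i) := by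
  classical
  induction s using Finset.induction_on with
  | empty => simpa using zero
  | insert i s hi ih =>
    rw [sum_insert hi, sum_insert hi]
    exact (h i (mem_insert_self i s)).add (ih fun j hj => h j (mem_insert_of_mem hj))

theorem smul (h : IsPCPFactorWidth k A B) {c : ℝ} (hc : 0 ≤ c) :
    IsPCPFactorWidth k ((c : ℂ) • A) ((c : ℂ) • B) := by
  obtain ⟨N, v, w, hvw, rfl, rfl⟩ := h
  refine ⟨N, fun t i => Real.sqrt c * v t i, w, fun t => (card_le_card ?_).trans (hvw t), ?_, ?_⟩
  · intro i
    simp only [mem_filter, mem_univ, true_and]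
    exact fun h h' => h (by rw [mul_assoc, h', mul_zero])
  all_goals
    rw [smul_sum]
    refine sum_congr rfl fun t _ => ?_
    ext i j
    simp only [vecMulVec_apply, Matrix.smul_apply, smul_eq_mul, Pi.star_apply, star_mul,
      ← Complex.ofReal_sqrt_mul_star hc]
    ring

theorem mono {k' : ℕ} (h : IsPCPFactorWidth k A B) (hk : k ≤ k') : IsPCPFactorWidth k' A B := by
  obtain ⟨N, v, w, hvw, hA, hB⟩ := h
  exact ⟨N, v, w, fun t => (hvw t).trans hk, hA, hB⟩

theorem rankOne (v w : n → ℂ) (hvw : (univ.filter fun i => (v * w) i ≠ 0).card ≤ k) :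
    IsPCPFactorWidth k (vecMulVec (v * star v) (star (w * star w)))
      (vecMulVec (v * w) (star (v * w))) :=
  ⟨1, fun _ => v, fun _ => w, fun _ => hvw, by rw [Fin.sum_univ_one]; rfl,
    by rw [Fin.sum_univ_one]; rfl⟩

end IsPCPFactorWidth

section Blocks

variable {n : Type*} [Fintype n] [DecidableEq n]

theorem isPCPFactorWidth_one_single_self (i : n) {t : ℝ} (ht : 0 ≤ t) :
    IsPCPFactorWidth 1 (single i i (t : ℂ)) (single i i (t : ℂ)) := by
  have hvv : Pi.single i (Real.sqrt t : ℂ) * star (Pi.single i (Real.sqrt t : ℂ)) =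
      (Pi.single i (t : ℂ) : n → ℂ) := by
    rw [← Pi.single_star, ← Pi.single_mul, Complex.ofReal_sqrt_mul_star ht]
  have hww : Pi.single i (1 : ℂ) * star (Pi.single i 1) = (Pi.single i 1 : n → ℂ) := by
    rw [← Pi.single_star, ← Pi.single_mul, star_one, mul_one]
  have hvw : Pi.single i (Real.sqrt t : ℂ) * Pi.single i 1 =
      (Pi.single i (Real.sqrt t : ℂ) : n → ℂ) := by
    rw [← Pi.single_mul, mul_one]
  have := IsPCPFactorWidth.rankOne (k := 1) (Pi.single i (Real.sqrt t : ℂ)) (Pi.single i 1)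
    (by rw [hvw]; exact Pi.card_filter_single_ne_zero_le_one i _)
  rwa [hvv, hww, hvw, ← Pi.single_star, ← Pi.single_star, vecMulVec_single_single,
    vecMulVec_single_single, star_one, mul_one, Complex.ofReal_sqrt_mul_star ht] at this

theorem isPCPFactorWidth_zero_single_of_ne {i j : n} (hij : i ≠ j) {t : ℝ} (ht : 0 ≤ t) :
    IsPCPFactorWidth 0 (single i j (t : ℂ)) 0 := by
  have hvv : Pi.single i (Real.sqrt t : ℂ) * star (Pi.single i (Real.sqrt t : ℂ)) =
      (Pi.single i (t : ℂ) : n → ℂ) := by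
    rw [← Pi.single_star, ← Pi.single_mul, Complex.ofReal_sqrt_mul_star ht]
  have hww : Pi.single j (1 : ℂ) * star (Pi.single j 1) = (Pi.single j 1 : n → ℂ) := by
    rw [← Pi.single_star, ← Pi.single_mul, star_one, mul_one]
  have hvw := Pi.single_mul_single_of_ne hij (Real.sqrt t : ℂ) 1
  have := IsPCPFactorWidth.rankOne (k := 0) (Pi.single i (Real.sqrt t : ℂ)) (Pi.single j 1)
    (by rw [hvw]; simp)
  rwa [hvv, hww, hvw, ← Pi.single_star, vecMulVec_single_single, star_one, mul_one,
    zero_vecMulVec] at this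

theorem isPCPFactorWidth_two_offDiag_of_ne_zero {i j : n} (hij : i ≠ j) {b : ℂ} (hb : b ≠ 0)
    {a : ℝ} (ha : 0 < a) :
    IsPCPFactorWidth 2
      (single i i (‖b‖ : ℂ) + single i j (a : ℂ) + single j i ((‖b‖ ^ 2 / a : ℝ) : ℂ) +
        single j j (‖b‖ : ℂ))
      (single i i (‖b‖ : ℂ) + single i j b + single j i (star b) + single j j (‖b‖ : ℂ)) := by
  set s := Real.sqrt ‖b‖
  set t := Real.sqrt a
  have hs : (s : ℂ) ≠ 0 := by simpa [s] using hb
  have ht : (t : ℂ) ≠ 0 := by simp [t, ha.ne', ha.le]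
  have hs2 : (s : ℂ) ^ 2 = ‖b‖ := by rw [← Complex.ofReal_pow, Real.sq_sqrt (norm_nonneg b)]
  have ht2 : (t : ℂ) ^ 2 = a := by rw [← Complex.ofReal_pow, Real.sq_sqrt ha.le]
  have hbb : b * star b = (s : ℂ) ^ 4 := by
    rw [Complex.star_def, Complex.mul_conj', show (4 : ℕ) = 2 * 2 from rfl, pow_mul, hs2]
  have hss : star (s : ℂ) = s := Complex.conj_ofReal s
  have htt : star (t : ℂ) = t := Complex.conj_ofReal t
  -- `|v|² = (1, ‖b‖ / a)`, `|w|² = (‖b‖, a)` and `v ⊙ w = (b / √‖b‖, √‖b‖)`.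
  have := IsPCPFactorWidth.rankOne (k := 2)
    (Pi.single i (b / (s : ℂ) ^ 2) + Pi.single j ((s : ℂ) / t))
    (Pi.single i (s : ℂ) + Pi.single j (t : ℂ))
    (by rw [Pi.single_add_single_mul_single_add_single hij]
        exact Pi.card_filter_single_add_single_ne_zero_le_two i j _ _)
  simp only [star_add, ← Pi.single_star, Pi.single_add_single_mul_single_add_single hij,
    vecMulVec_single_add_single, star_div₀, star_mul, star_pow, hss, htt] at this
  convert this using 1 <;>
    refine congrArg₂ (· + ·) (congrArg₂ (· + ·) (congrArg₂ (· + ·) (congrArg _ ?_)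
      (congrArg _ ?_)) (congrArg _ ?_)) (congrArg _ ?_) <;>
    (push_cast; try simp only [← hs2, ← ht2])
  all_goals field_simp
  all_goals exact hbb.symm

theorem isPCPFactorWidth_two_offDiag {i j : n} (hij : i ≠ j) {a a' : ℝ} (ha : 0 ≤ a)
    (ha' : 0 ≤ a') {b : ℂ} (hb : ‖b‖ ^ 2 ≤ a * a') :
    IsPCPFactorWidth 2
      (single i i (‖b‖ : ℂ) + single i j (a : ℂ) + (single j j (‖b‖ : ℂ) + single j i (a' : ℂ)))
      (single i i (‖b‖ : ℂ) + single i j b + (single j j (‖b‖ : ℂ) + single j i (star b))) := by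
  rcases eq_or_ne b 0 with rfl | hb0
  · simpa using ((isPCPFactorWidth_zero_single_of_ne hij ha).add
      (isPCPFactorWidth_zero_single_of_ne hij.symm ha')).mono zero_le_two
  have ha_pos : 0 < a := by
    have := norm_pos_iff.mpr hb0
    by_contra h
    nlinarith
  have hc : 0 ≤ a' - ‖b‖ ^ 2 / a := by
    rw [sub_nonneg, div_le_iff₀ ha_pos]
    linarith
  convert (isPCPFactorWidth_two_offDiag_of_ne_zero hij hb0 ha_pos).add
    ((isPCPFactorWidth_zero_single_of_ne hij.symm hc).mono zero_le_two) using 1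
  · rw [show (a' : ℂ) = ((‖b‖ ^ 2 / a : ℝ) : ℂ) + ((a' - ‖b‖ ^ 2 / a : ℝ) : ℂ) by push_cast; ring,
      single_add]
    abel
  · rw [add_zero]
    abel

end Blocks

/-- If `(A,B)` have equal diagonals, `A` has nonnegative entries, `B` is hermitian
diagonally dominant, and `A_{ij}A_{ji} ≥ |B_{ij}|²` for all `i,j`, then `(A,B)` is pairwise
completely positive with factor width 2. -/
theorem pcp_factor_width_two_of_diagonally_dominant {d : ℕ}
    (A B : Matrix (Fin d) (Fin d) ℂ) (hdiag : ∀ i, A i i = B i i)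
    (hA : ∀ i j, (A i j).im = 0 ∧ 0 ≤ (A i j).re)
    (hherm : B.IsHermitian)
    (hdd : ∀ i, ∑ j ∈ univ.filter (· ≠ i), ‖B i j‖ ≤ (B i i).re)
    (hineq : ∀ i j, ‖B i j‖ ^ 2 ≤ (A i j).re * (A j i).re) :
    ∃ (N : ℕ) (v w : Fin N → Fin d → ℂ),
      (∀ n, (univ.filter (fun i => v n i * w n i ≠ 0)).card ≤ 2) ∧
      A = ∑ n, vecMulVec (fun i => v n i * star (v n i))
                (star fun j => w n j * star (w n j)) ∧
      B = ∑ n, vecMulVec (fun i => v n i * w n i)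
                (star fun j => v n j * w n j) := by
  set δ : Fin d → ℝ := fun i => (B i i).re - ∑ j ∈ univ.erase i, ‖B i j‖
  have hδ : ∀ i, 0 ≤ δ i := fun i => sub_nonneg.mpr (filter_ne' univ i ▸ hdd i)
  have hBdiag : ∀ i, B i i = (δ i : ℂ) + ∑ j ∈ univ.erase i, (‖B i j‖ : ℂ) := fun i => by
    rw [← Complex.conj_eq_iff_re.mp (hherm.apply i i)]
    push_cast [δ]
    ring
  have hAre : ∀ i j, ((A i j).re : ℂ) = A i j := fun i j => Complex.ext rfl (by simp [(hA i j).1])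
  have hnorm : ∀ i j, ‖B j i‖ = ‖B i j‖ := fun i j => by rw [← hherm.apply i j, norm_star]
  have hblock : ∀ i, ∀ j ∈ univ.erase i, IsPCPFactorWidth 2
      ((2⁻¹ : ℂ) • (single i i (‖B i j‖ : ℂ) + single i j (A i j) +
        (single j j (‖B j i‖ : ℂ) + single j i (A j i))))
      ((2⁻¹ : ℂ) • (single i i (‖B i j‖ : ℂ) + single i j (B i j) +
        (single j j (‖B j i‖ : ℂ) + single j i (B j i)))) := fun i j hj => by
    have := (isPCPFactorWidth_two_offDiag (ne_of_mem_erase hj).symm (hA i j).2 (hA j i).2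
      (hineq i j)).smul (by norm_num : (0 : ℝ) ≤ 2⁻¹)
    push_cast at this
    rw [hnorm i j]
    rwa [hAre, hAre, hherm.apply j i] at this
  have hdiagonal := (IsPCPFactorWidth.sum univ fun i _ =>
    isPCPFactorWidth_one_single_self i (hδ i)).mono one_le_two
  have hsum := hdiagonal.add (IsPCPFactorWidth.sum univ fun i _ => IsPCPFactorWidth.sum _ (hblock i))
  rwa [← eq_sum_single_add_sum_halves A _ _ fun i => hdiag i ▸ hBdiag i,
    ← eq_sum_single_add_sum_halves B _ _ hBdiag] at hsum
end
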